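/- Let 2 ≤ t ≤ n, n = (t+1)p + d with 0 ≤ d ≤ t, and i ≤ j < n. If β_{i,j}(R/I_t(C_n)) ≠ 0, then j − i ≤ (t−1)p. -/

import Mathlib

open Finset

def SC.facesC (Δ : Set (Finset ℕ)) (c : ℤ) : Type :=
  {F : Finset ℕ // F ∈ Δ ∧ (F.card : ℤ) = c}

open Classical in
noncomputable def SC.bdry (K : Type) [Field K] (Δ : Set (Finset ℕ)) (a b : ℤ) :
    (SC.facesC Δ a →₀ K) →ₗ[K] (SC.facesC Δ b →₀ K) :=
  Finsupp.lsum K fun F => LinearMap.toSpanSingleton K _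
    (∑ x ∈ F.1, if h : F.1.erase x ∈ Δ ∧ (((F.1.erase x).card : ℤ) = b)
      then ((-1 : K) ^ (F.1.filter (fun y => y < x)).card) •
        Finsupp.single (⟨F.1.erase x, h⟩ : SC.facesC Δ b) (1 : K)
      else 0)

noncomputable def SC.hdim (K : Type) [Field K] (Δ : Set (Finset ℕ)) (i : ℤ) : ℕ :=
  Module.finrank K (LinearMap.ker (SC.bdry K Δ (i + 1) i)) -
    Module.finrank K (LinearMap.range (SC.bdry K Δ (i + 2) (i + 1)))

def SC.gen (S : Set (Finset ℕ)) : Set (Finset ℕ) := {F | ∃ A ∈ S, F ⊆ A}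

/-- The facet `F_a = {x_a, …, x_{a+t-1}}` (indices mod `n`, vertices `0, …, n-1`). -/
def cycForm (n t a : ℕ) : Finset ℕ := (Finset.range t).image (fun k => (a + k) % n)

/-- The facets of the path complex `Δ_t(C_n)` of the cycle. -/
def cycFacets (n t : ℕ) : Finset (Finset ℕ) := (Finset.range n).image (cycForm n t)

/-- The Stanley–Reisner complex on vertex set `{0,…,n-1}` of the squarefree monomial ideal
whose minimal generators have supports `Gens`. -/
def SRcomplex (n : ℕ) (Gens : Finset (Finset ℕ)) : Set (Finset ℕ) :=
  {F | F ⊆ Finset.range n ∧ ¬ ∃ G ∈ Gens, G ⊆ F}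

open Classical in
/-- The graded Betti number `β_{i,j}(R/I)` of the squarefree monomial ideal
`I ⊆ K[x_0,…,x_{n-1}]` with generator supports `Gens`, characterized by
Hochster's formula: `β_{i,j}(R/I) = Σ_{W, |W| = j} dim_K H̃_{j-i-1}((Δ_I)|_W; K)`. -/
noncomputable def betti (K : Type) [Field K] (n : ℕ) (Gens : Finset (Finset ℕ)) (i j : ℕ) : ℕ :=
  ∑ W ∈ (Finset.range n).powersetCard j,
    SC.hdim K {F | F ∈ SRcomplex n Gens ∧ F ⊆ W} ((j : ℤ) - i - 1)

/-- Betti numbers of `R/I_t(C_n)`. -/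
noncomputable def bettiCycle (K : Type) [Field K] (n t i j : ℕ) : ℕ :=
  betti K n (cycFacets n t) i j

/-- The facets of a run of length `s` (for path length `t`) starting at vertex `a`:
`F_i = {a+i, …, a+i+t-1}` for `0 ≤ i < s`. -/
def runFacets (t a s : ℕ) : Set (Finset ℕ) := {F | ∃ i < s, F = Finset.Ico (a + i) (a + i + t)}

/-- Facets of a disjoint union of runs of lengths `L`, laid out left to right starting
at vertex `a`, with a gap between consecutive runs. -/
def runsFacets (t : ℕ) : ℕ → List ℕ → Set (Finset ℕ)
  | _, [] => ∅
  | a, s :: L => runFacets t a s ∪ runsFacets t (a + s + t) L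

/-- Vertex set of the above disjoint union of runs (a run of length `s` has `s+t-1` vertices). -/
def runsVerts (t : ℕ) : ℕ → List ℕ → Finset ℕ
  | _, [] => ∅
  | a, s :: L => Finset.Ico a (a + s + t - 1) ∪ runsVerts t (a + s + t) L

/-- `E(s_1,…,s_r)`: the complex generated by the complements, within the total vertex set,
of the facets of a disjoint union of runs of lengths `s_1, …, s_r`. -/
def EC (t : ℕ) (L : List ℕ) : Set (Finset ℕ) :=
  SC.gen {G | ∃ F ∈ runsFacets t 0 L, G = runsVerts t 0 L \ F}


/-!
By Hochster's formula it suffices to show: if `W ⊊ {0, …, n-1}` and the restriction `Δ|_W` of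
the Stanley–Reisner complex of `I_t(C_n)` has `H̃_ℓ(Δ|_W) ≠ 0`, then `ℓ + 1 ≤ (t - 1) p`.
Pick `s ∈ W` whose cyclic predecessor is not in `W`; the only forbidden `t`-path through `s`
inside `W` is then the one starting at `s`. If that path is not contained in `W`, `Δ|_W` is a
cone with apex `s`. Otherwise let `B` be the `t - 1` vertices following `s` and `C` the `t + 1`
vertices starting at `s`: the faces not containing `B` form a cone with apex `s`, and the faces
containing `B` are the join of `B` with `Δ|_{W \ C}`, so `H̃_{ℓ-(t-1)}(Δ|_{W \ C}) ≠ 0`.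
Each step removes `t + 1` vertices from `W ∪ (W + 1)`, a set of at most `n = (t + 1) p + d`
vertices, so there are at most `p` steps.
-/

namespace SC

variable {K : Type} [Field K] {Δ Δ' : Set (Finset ℕ)}

open Classical in
noncomputable def faceSingle (Δ : Set (Finset ℕ)) (b : ℤ) (G : Finset ℕ) (c : K) :
    facesC Δ b →₀ K :=
  if h : G ∈ Δ ∧ (G.card : ℤ) = b then Finsupp.single (α := facesC Δ b) ⟨G, h⟩ c else 0

lemma faceSingle_of_mem {b : ℤ} {G : Finset ℕ} (hG : G ∈ Δ) (hb : (G.card : ℤ) = b) (c : K) :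
    faceSingle Δ b G c = Finsupp.single (α := facesC Δ b) ⟨G, hG, hb⟩ c :=
  dif_pos ⟨hG, hb⟩

lemma faceSingle_of_notMem {b : ℤ} {G : Finset ℕ} (h : ¬ (G ∈ Δ ∧ (G.card : ℤ) = b)) (c : K) :
    faceSingle Δ b G c = 0 :=
  dif_neg h

lemma faceSingle_zero (Δ : Set (Finset ℕ)) (b : ℤ) (G : Finset ℕ) :
    faceSingle Δ b G (0 : K) = 0 := by
  unfold faceSingle; split
  · exact Finsupp.single_zero _
  · rfl

lemma faceSingle_add (Δ : Set (Finset ℕ)) (b : ℤ) (G : Finset ℕ) (c d : K) :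
    faceSingle Δ b G c + faceSingle Δ b G d = faceSingle Δ b G (c + d) := by
  unfold faceSingle; split
  · exact (Finsupp.single_add _ _ _).symm
  · exact add_zero 0

lemma smul_faceSingle (Δ : Set (Finset ℕ)) (b : ℤ) (G : Finset ℕ) (c d : K) :
    c • faceSingle Δ b G d = faceSingle Δ b G (c * d) := by
  unfold faceSingle; split
  · exact Finsupp.smul_single _ _ _
  · exact smul_zero c

lemma faceSingle_eq_smul (Δ : Set (Finset ℕ)) (b : ℤ) (G : Finset ℕ) (c : K) :
    faceSingle Δ b G c = c • faceSingle Δ b G 1 := by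
  rw [smul_faceSingle, mul_one]

def faceSign (K : Type) [Field K] (F : Finset ℕ) (x : ℕ) : K :=
  (-1) ^ (F.filter (fun y => y < x)).card

lemma faceSign_mul_self (F : Finset ℕ) (x : ℕ) : faceSign K F x * faceSign K F x = 1 := by
  rw [faceSign, ← mul_pow]; norm_num

lemma faceSign_erase {F : Finset ℕ} {x : ℕ} (hx : x ∈ F) (y : ℕ) :
    faceSign K (F.erase x) y = (if x < y then -1 else 1) * faceSign K F y := by
  unfold faceSign
  rw [filter_erase]
  split_ifs with hxy
  · rw [← card_erase_add_one (mem_filter.2 ⟨hx, hxy⟩), pow_succ]; ring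
  · rw [erase_eq_of_notMem (by simp [hxy]), one_mul]

lemma faceSign_insert {F : Finset ℕ} {v : ℕ} (hv : v ∉ F) (x : ℕ) :
    faceSign K (insert v F) x = (if v < x then -1 else 1) * faceSign K F x := by
  have h := faceSign_erase (K := K) (mem_insert_self v F) x
  rw [erase_insert hv] at h
  rw [h, ← mul_assoc]
  split_ifs <;> norm_num

lemma faceSign_insert_self (F : Finset ℕ) (v : ℕ) : faceSign K (insert v F) v = faceSign K F v := by
  rw [faceSign, filter_insert, if_neg (lt_irrefl v), faceSign]

lemma faceSign_erase_self (F : Finset ℕ) (v : ℕ) : faceSign K (F.erase v) v = faceSign K F v := by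
  rw [faceSign, filter_erase, erase_eq_of_notMem (by simp), faceSign]

lemma faceSign_erase_swap {F : Finset ℕ} {x y : ℕ} (hx : x ∈ F) (hy : y ∈ F) (hxy : x ≠ y) :
    faceSign K F x * faceSign K (F.erase x) y + faceSign K F y * faceSign K (F.erase y) x = 0 := by
  rw [faceSign_erase hx, faceSign_erase hy]
  rcases hxy.lt_or_gt with h | h
  · rw [if_pos h, if_neg h.not_gt]; ring
  · rw [if_neg h.not_gt, if_pos h]; ring

lemma faceSign_insert_swap {F : Finset ℕ} {v x : ℕ} (hv : v ∉ F) (hx : x ∈ F) :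
    faceSign K F v * faceSign K (insert v F) x + faceSign K F x * faceSign K (F.erase x) v = 0 := by
  rw [faceSign_insert hv, faceSign_erase hx]
  rcases (ne_of_mem_of_not_mem hx hv).lt_or_gt with h | h
  · rw [if_neg h.not_gt, if_pos h]; ring
  · rw [if_pos h, if_neg h.not_gt]; ring

lemma bdry_single {a b : ℤ} (F : facesC Δ a) :
    bdry K Δ a b (Finsupp.single F 1) =
      ∑ x ∈ F.1, faceSingle Δ b (F.1.erase x) (faceSign K F.1 x) := by
  rw [bdry, Finsupp.lsum_single, LinearMap.toSpanSingleton_apply, one_smul]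
  refine sum_congr rfl fun x _ => ?_
  unfold faceSingle faceSign
  split
  · rename_i h
    exact (dif_pos h).trans (Finsupp.smul_single_one _ _)
  · rename_i h
    exact dif_neg h

lemma bdry_faceSingle {a b : ℤ} {G : Finset ℕ} (hG : G ∈ Δ) (ha : (G.card : ℤ) = a) (c : K) :
    bdry K Δ a b (faceSingle Δ a G c) =
      ∑ x ∈ G, faceSingle Δ b (G.erase x) (c * faceSign K G x) := by
  rw [faceSingle_eq_smul, map_smul, faceSingle_of_mem hG ha,
    bdry_single (⟨G, hG, ha⟩ : facesC Δ a), smul_sum]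
  simp only [smul_faceSingle]

lemma bdry_eq_zero_of_ne {a b : ℤ} (h : b ≠ a - 1) : bdry K Δ a b = 0 := by
  refine Finsupp.lhom_ext' fun F => LinearMap.ext_ring ?_
  simp only [LinearMap.comp_apply, Finsupp.lsingle_apply, LinearMap.zero_comp,
    LinearMap.zero_apply]
  rw [bdry_single]
  refine sum_eq_zero fun x hx => faceSingle_of_notMem (fun hc => h ?_) _
  rw [← hc.2, cast_card_erase_of_mem hx, F.2.2]

theorem bdry_comp_bdry (hΔ : IsLowerSet Δ) (a b c : ℤ) :
    bdry K Δ b c ∘ₗ bdry K Δ a b = 0 := by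
  rcases eq_or_ne b (a - 1) with rfl | hb
  swap
  · rw [bdry_eq_zero_of_ne hb, LinearMap.comp_zero]
  refine Finsupp.lhom_ext' fun F => LinearMap.ext_ring ?_
  simp only [LinearMap.comp_apply, Finsupp.lsingle_apply, LinearMap.zero_comp,
    LinearMap.zero_apply]
  rw [bdry_single, map_sum]
  have hface : ∀ x ∈ F.1,
      bdry K Δ (a - 1) c (faceSingle Δ (a - 1) (F.1.erase x) (faceSign K F.1 x)) =
      ∑ y ∈ F.1.erase x, faceSingle Δ c ((F.1.erase x).erase y)
        (faceSign K F.1 x * faceSign K (F.1.erase x) y) := fun x hx =>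
    bdry_faceSingle (hΔ (erase_subset x F.1) F.2.1)
      (by rw [cast_card_erase_of_mem hx, F.2.2]) _
  rw [sum_congr rfl hface, sum_sigma']
  -- the terms indexed by `⟨x, y⟩` and `⟨y, x⟩` cancel
  refine sum_involution (fun p _ => ⟨p.2, p.1⟩) ?_ ?_ ?_ ?_
  · rintro ⟨x, y⟩ hp
    obtain ⟨hx, hy⟩ := mem_sigma.1 hp
    obtain ⟨hyx, hyF⟩ := mem_erase.1 hy
    rw [erase_right_comm, faceSingle_add, faceSign_erase_swap hx hyF hyx.symm,
      faceSingle_zero]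
  · rintro ⟨x, y⟩ hp _ heq
    exact (ne_of_mem_erase (mem_sigma.1 hp).2) (congrArg Sigma.fst heq)
  · rintro ⟨x, y⟩ hp
    obtain ⟨hx, hy⟩ := mem_sigma.1 hp
    exact mem_sigma.2 ⟨mem_of_mem_erase hy,
      mem_erase.2 ⟨(ne_of_mem_erase hy).symm, hx⟩⟩
  · intros; rfl

open Classical in
noncomputable def coneOp (K : Type) [Field K] (Δ : Set (Finset ℕ)) (v : ℕ) (a b : ℤ) :
    (facesC Δ a →₀ K) →ₗ[K] (facesC Δ b →₀ K) :=
  Finsupp.lsum K fun F => LinearMap.toSpanSingleton K _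
    (if v ∈ F.1 then 0 else faceSingle Δ b (insert v F.1) (faceSign K F.1 v))

lemma coneOp_single {v : ℕ} {a b : ℤ} (F : facesC Δ a) :
    coneOp K Δ v a b (Finsupp.single F 1) =
      if v ∈ F.1 then 0 else faceSingle Δ b (insert v F.1) (faceSign K F.1 v) := by
  rw [coneOp, Finsupp.lsum_single, LinearMap.toSpanSingleton_apply, one_smul]

lemma coneOp_faceSingle {v : ℕ} {a b : ℤ} {G : Finset ℕ} (hG : G ∈ Δ) (ha : (G.card : ℤ) = a)
    (c : K) : coneOp K Δ v a b (faceSingle Δ a G c) =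
      if v ∈ G then 0 else faceSingle Δ b (insert v G) (c * faceSign K G v) := by
  rw [faceSingle_eq_smul, map_smul, faceSingle_of_mem hG ha,
    coneOp_single (⟨G, hG, ha⟩ : facesC Δ a)]
  split_ifs
  · exact smul_zero c
  · exact smul_faceSingle _ _ _ _ _

section Homotopy

variable {v : ℕ} {a b c : ℤ}

lemma bdry_coneOp_add_coneOp_bdry_single_of_mem (hΔ : IsLowerSet Δ) (hc : c = a - 1)
    (F : facesC Δ a) (hv : v ∈ F.1) :
    bdry K Δ b a (coneOp K Δ v a b (Finsupp.single F 1))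
      + coneOp K Δ v c a (bdry K Δ a c (Finsupp.single F 1)) = Finsupp.single F 1 := by
  subst hc
  rw [coneOp_single, if_pos hv, map_zero, zero_add, bdry_single, map_sum,
    sum_eq_single_of_mem v hv]
  · rw [coneOp_faceSingle (hΔ (erase_subset v F.1) F.2.1)
      (by rw [cast_card_erase_of_mem hv, F.2.2]), if_neg (notMem_erase v F.1),
      insert_erase hv, faceSign_erase_self, faceSign_mul_self,
      faceSingle_of_mem F.2.1 F.2.2]
    rfl
  · intro x hx hxv
    rw [coneOp_faceSingle (hΔ (erase_subset x F.1) F.2.1)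
      (by rw [cast_card_erase_of_mem hx, F.2.2]),
      if_pos (mem_erase.2 ⟨Ne.symm hxv, hv⟩)]

lemma bdry_coneOp_add_coneOp_bdry_single_of_notMem (hΔ : IsLowerSet Δ) (hb : b = a + 1)
    (hc : c = a - 1) (F : facesC Δ a) (hv : v ∉ F.1) (hvF : insert v F.1 ∈ Δ) :
    bdry K Δ b a (coneOp K Δ v a b (Finsupp.single F 1))
      + coneOp K Δ v c a (bdry K Δ a c (Finsupp.single F 1)) = Finsupp.single F 1 := by
  subst hb hc
  have hcard : ((insert v F.1).card : ℤ) = a + 1 := by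
    rw [card_insert_of_notMem hv, Nat.cast_succ, F.2.2]
  have hcone : bdry K Δ (a + 1) a (coneOp K Δ v a (a + 1) (Finsupp.single F 1)) =
      Finsupp.single F 1 + ∑ x ∈ F.1, faceSingle Δ a (insert v (F.1.erase x))
        (faceSign K F.1 v * faceSign K (insert v F.1) x) := by
    rw [coneOp_single, if_neg hv, bdry_faceSingle hvF hcard, sum_insert hv,
      erase_insert hv, faceSign_insert_self, faceSign_mul_self,
      faceSingle_of_mem F.2.1 F.2.2]
    refine congrArg₂ _ rfl (sum_congr rfl fun x hx => ?_)
    rw [erase_insert_of_ne (ne_of_mem_of_not_mem hx hv).symm]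
  have hbdry : coneOp K Δ v (a - 1) a (bdry K Δ a (a - 1) (Finsupp.single F 1)) =
      ∑ x ∈ F.1, faceSingle Δ a (insert v (F.1.erase x))
        (faceSign K F.1 x * faceSign K (F.1.erase x) v) := by
    rw [bdry_single, map_sum]
    refine sum_congr rfl fun x hx => ?_
    rw [coneOp_faceSingle (hΔ (erase_subset x F.1) F.2.1)
      (by rw [cast_card_erase_of_mem hx, F.2.2]),
      if_neg (fun h => hv (mem_of_mem_erase h))]
  rw [hcone, hbdry, add_assoc, ← sum_add_distrib, add_eq_left]
  exact sum_eq_zero fun x hx => by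
    rw [faceSingle_add, faceSign_insert_swap hv hx, faceSingle_zero]

theorem bdry_coneOp_add_coneOp_bdry (hΔ : IsLowerSet Δ) (hb : b = a + 1) (hc : c = a - 1)
    {z : facesC Δ a →₀ K} (hz : z ∈ Finsupp.supported K K {F | v ∉ F.1 → insert v F.1 ∈ Δ}) :
    bdry K Δ b a (coneOp K Δ v a b z) + coneOp K Δ v c a (bdry K Δ a c z) = z := by
  suffices h : Finsupp.supported K K {F : facesC Δ a | v ∉ F.1 → insert v F.1 ∈ Δ} ≤
      LinearMap.eqLocus (bdry K Δ b a ∘ₗ coneOp K Δ v a b + coneOp K Δ v c a ∘ₗ bdry K Δ a c)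
        LinearMap.id from h hz
  rw [Finsupp.supported_eq_span_single, Submodule.span_le]
  rintro _ ⟨F, hF, rfl⟩
  by_cases hv : v ∈ F.1
  · exact bdry_coneOp_add_coneOp_bdry_single_of_mem hΔ hc F hv
  · exact bdry_coneOp_add_coneOp_bdry_single_of_notMem hΔ hb hc F hv (hF hv)

end Homotopy

lemma finite_facesC (hfin : Δ.Finite) (c : ℤ) : Finite (facesC Δ c) :=
  have := hfin.to_subtype
  Finite.of_injective (fun F : facesC Δ c => (⟨F.1, F.2.1⟩ : Δ))
    fun _ _ h => Subtype.ext (Subtype.mk.inj h)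

lemma range_bdry_le_ker_bdry (hΔ : IsLowerSet Δ) (ℓ : ℤ) :
    LinearMap.range (bdry K Δ (ℓ + 2) (ℓ + 1)) ≤ LinearMap.ker (bdry K Δ (ℓ + 1) ℓ) := by
  rintro _ ⟨y, rfl⟩
  exact LinearMap.congr_fun (bdry_comp_bdry hΔ _ _ _) y

theorem hdim_eq_zero_iff (hΔ : IsLowerSet Δ) (hfin : Δ.Finite) (ℓ : ℤ) :
    hdim K Δ ℓ = 0 ↔
      LinearMap.ker (bdry K Δ (ℓ + 1) ℓ) ≤ LinearMap.range (bdry K Δ (ℓ + 2) (ℓ + 1)) := by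
  have := finite_facesC hfin (ℓ + 1)
  rw [hdim, Nat.sub_eq_zero_iff_le]
  exact ⟨fun h => (Submodule.eq_of_le_of_finrank_le (range_bdry_le_ker_bdry hΔ ℓ) h).ge,
    Submodule.finrank_mono⟩

theorem hdim_eq_zero_of_cone (hΔ : IsLowerSet Δ) (hfin : Δ.Finite) {v : ℕ}
    (hcone : ∀ F ∈ Δ, insert v F ∈ Δ) (ℓ : ℤ) : hdim K Δ ℓ = 0 := by
  refine (hdim_eq_zero_iff hΔ hfin ℓ).2 fun z hz => ⟨coneOp K Δ v (ℓ + 1) (ℓ + 2) z, ?_⟩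
  have h := bdry_coneOp_add_coneOp_bdry (K := K) (v := v) (a := ℓ + 1) (b := ℓ + 2) (c := ℓ) hΔ
    (by ring) (by ring) ((Finsupp.mem_supported K z).2 fun F _ _ => hcone F.1 F.2.1)
  rwa [LinearMap.mem_ker.1 hz, map_zero, add_zero] at h

theorem hdim_eq_zero_of_forall_card_ne (hΔ : IsLowerSet Δ) (hfin : Δ.Finite) {ℓ : ℤ}
    (h : ∀ F ∈ Δ, (F.card : ℤ) ≠ ℓ + 1) : hdim K Δ ℓ = 0 := by
  have : IsEmpty (facesC Δ (ℓ + 1)) := ⟨fun F => h F.1 F.2.1 F.2.2⟩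
  refine (hdim_eq_zero_iff hΔ hfin ℓ).2 fun z _ => ?_
  rw [Subsingleton.elim z 0]
  exact zero_mem _

section Join

variable {B : Finset ℕ}

def joinSign (K : Type) [Field K] (B G : Finset ℕ) : K :=
  (-1) ^ ∑ g ∈ G, (B.filter (fun y => y < g)).card

lemma joinSign_mul_self (B G : Finset ℕ) : joinSign K B G * joinSign K B G = 1 := by
  rw [joinSign, ← mul_pow]; norm_num

lemma joinSign_eq_erase_mul {G : Finset ℕ} {x : ℕ} (hx : x ∈ G) :
    joinSign K B G = joinSign K B (G.erase x) * (-1) ^ (B.filter (fun y => y < x)).card := by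
  rw [joinSign, joinSign, ← sum_erase_add G _ hx, pow_add]

lemma faceSign_eq_sdiff_mul {F : Finset ℕ} (hBF : B ⊆ F) (x : ℕ) :
    faceSign K F x = faceSign K (F \ B) x * (-1) ^ (B.filter (fun y => y < x)).card := by
  rw [faceSign, faceSign, ← pow_add, ← card_union_of_disjoint
    (disjoint_filter_filter sdiff_disjoint), ← filter_union,
    sdiff_union_of_subset hBF]

open Classical in
noncomputable def linkProj (K : Type) [Field K] (Δ Δ' : Set (Finset ℕ)) (B : Finset ℕ)
    (a a' : ℤ) : (facesC Δ a →₀ K) →ₗ[K] (facesC Δ' a' →₀ K) :=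
  Finsupp.lsum K fun F => LinearMap.toSpanSingleton K _
    (if B ⊆ F.1 then faceSingle Δ' a' (F.1 \ B) (joinSign K B (F.1 \ B)) else 0)

noncomputable def joinLift (K : Type) [Field K] (Δ Δ' : Set (Finset ℕ)) (B : Finset ℕ)
    (a' a : ℤ) : (facesC Δ' a' →₀ K) →ₗ[K] (facesC Δ a →₀ K) :=
  Finsupp.lsum K fun G => LinearMap.toSpanSingleton K _
    (faceSingle Δ a (B ∪ G.1) (joinSign K B G.1))

variable {a a' b b' : ℤ}

lemma linkProj_single (F : facesC Δ a) :
    linkProj K Δ Δ' B a a' (Finsupp.single F 1) =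
      if B ⊆ F.1 then faceSingle Δ' a' (F.1 \ B) (joinSign K B (F.1 \ B)) else 0 := by
  rw [linkProj, Finsupp.lsum_single, LinearMap.toSpanSingleton_apply, one_smul]

lemma linkProj_faceSingle {G : Finset ℕ} (hG : G ∈ Δ) (ha : (G.card : ℤ) = a) (c : K) :
    linkProj K Δ Δ' B a a' (faceSingle Δ a G c) =
      if B ⊆ G then faceSingle Δ' a' (G \ B) (c * joinSign K B (G \ B)) else 0 := by
  rw [faceSingle_eq_smul, map_smul, faceSingle_of_mem hG ha,
    linkProj_single (⟨G, hG, ha⟩ : facesC Δ a)]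
  split_ifs
  · exact smul_faceSingle _ _ _ _ _
  · exact smul_zero c

lemma joinLift_single (G : facesC Δ' a') :
    joinLift K Δ Δ' B a' a (Finsupp.single G 1) = faceSingle Δ a (B ∪ G.1) (joinSign K B G.1) := by
  rw [joinLift, Finsupp.lsum_single, LinearMap.toSpanSingleton_apply, one_smul]

lemma card_sdiff_eq {F : Finset ℕ} (hBF : B ⊆ F) (hF : (F.card : ℤ) = a) (ha' : a' = a - B.card) :
    ((F \ B).card : ℤ) = a' := by
  rw [card_sdiff_of_subset hBF, Nat.cast_sub (card_le_card hBF), hF, ha']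

theorem bdry_comp_linkProj (hΔ : IsLowerSet Δ) (hlink : ∀ F ∈ Δ, B ⊆ F → F \ B ∈ Δ')
    (hb : b = a - 1) (hb' : b' = a' - 1) (ha' : a' = a - B.card) :
    bdry K Δ' a' b' ∘ₗ linkProj K Δ Δ' B a a' = linkProj K Δ Δ' B b b' ∘ₗ bdry K Δ a b := by
  subst hb hb'
  refine Finsupp.lhom_ext' fun F => LinearMap.ext_ring ?_
  simp only [LinearMap.comp_apply, Finsupp.lsingle_apply]
  have hface : ∀ x ∈ F.1, linkProj K Δ Δ' B (a - 1) (a' - 1)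
      (faceSingle Δ (a - 1) (F.1.erase x) (faceSign K F.1 x)) =
        if B ⊆ F.1.erase x then faceSingle Δ' (a' - 1) (F.1.erase x \ B)
          (faceSign K F.1 x * joinSign K B (F.1.erase x \ B)) else 0 := fun x hx =>
    linkProj_faceSingle (hΔ (erase_subset x F.1) F.2.1)
      (by rw [cast_card_erase_of_mem hx, F.2.2]) _
  rw [linkProj_single, bdry_single, map_sum, sum_congr rfl hface]
  by_cases hBF : B ⊆ F.1
  · rw [if_pos hBF, bdry_faceSingle (hlink _ F.2.1 hBF) (card_sdiff_eq hBF F.2.2 ha'),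
      ← sum_subset (sdiff_subset (s := F.1) (t := B))]
    · refine sum_congr rfl fun x hx => ?_
      obtain ⟨hxF, hxB⟩ := mem_sdiff.1 hx
      have hBx : B ⊆ F.1.erase x := fun y hy =>
        mem_erase.2 ⟨ne_of_mem_of_not_mem hy hxB, hBF hy⟩
      rw [if_pos hBx,
        erase_sdiff_comm, faceSign_eq_sdiff_mul hBF, joinSign_eq_erase_mul hx]
      congr 1
      ring
    · intro x hxF hx
      have hxB : x ∈ B := by_contra fun h => hx (mem_sdiff.2 ⟨hxF, h⟩)
      rw [if_neg fun h => notMem_erase x F.1 (h hxB)]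
  · rw [if_neg hBF, map_zero]
    exact (sum_eq_zero fun x _ =>
      if_neg fun h => hBF (h.trans (erase_subset x F.1))).symm

theorem linkProj_comp_joinLift (hjoin : ∀ G ∈ Δ', B ∪ G ∈ Δ ∧ Disjoint B G)
    (ha' : a' = a - B.card) :
    linkProj K Δ Δ' B a a' ∘ₗ joinLift K Δ Δ' B a' a = LinearMap.id := by
  refine Finsupp.lhom_ext' fun G => LinearMap.ext_ring ?_
  simp only [LinearMap.comp_apply, Finsupp.lsingle_apply, LinearMap.id_apply]
  obtain ⟨hBG, hdisj⟩ := hjoin G.1 G.2.1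
  have hcard : ((B ∪ G.1).card : ℤ) = a := by
    rw [card_union_of_disjoint hdisj, Nat.cast_add, G.2.2, ha']; ring
  rw [joinLift_single, linkProj_faceSingle hBG hcard, if_pos subset_union_left,
    union_sdiff_cancel_left hdisj, joinSign_mul_self, faceSingle_of_mem G.2.1 G.2.2]
  rfl

lemma joinLift_linkProj_single (hlink : ∀ F ∈ Δ, B ⊆ F → F \ B ∈ Δ') (ha' : a' = a - B.card)
    (F : facesC Δ a) (hBF : B ⊆ F.1) :
    joinLift K Δ Δ' B a' a (linkProj K Δ Δ' B a a' (Finsupp.single F 1)) = Finsupp.single F 1 := by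
  have hlinkF := hlink _ F.2.1 hBF
  have hcard := card_sdiff_eq hBF F.2.2 ha'
  rw [linkProj_single, if_pos hBF, faceSingle_eq_smul, map_smul, faceSingle_of_mem hlinkF hcard,
    joinLift_single (⟨F.1 \ B, hlinkF, hcard⟩ : facesC Δ' a'), smul_faceSingle,
    joinSign_mul_self, union_sdiff_of_subset hBF,
    faceSingle_of_mem F.2.1 F.2.2]
  rfl

lemma sub_joinLift_linkProj_mem_supported (hlink : ∀ F ∈ Δ, B ⊆ F → F \ B ∈ Δ')
    (ha' : a' = a - B.card) (z : facesC Δ a →₀ K) :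
    z - joinLift K Δ Δ' B a' a (linkProj K Δ Δ' B a a' z) ∈
      Finsupp.supported K K {F | ¬ B ⊆ F.1} := by
  induction z using Finsupp.induction_linear with
  | zero => simp
  | add z₁ z₂ h₁ h₂ =>
    rw [map_add, map_add, add_sub_add_comm]
    exact add_mem h₁ h₂
  | single F c =>
    rw [← Finsupp.smul_single_one, map_smul, map_smul, ← smul_sub]
    refine Submodule.smul_mem _ c ?_
    by_cases hBF : B ⊆ F.1
    · rw [joinLift_linkProj_single hlink ha' F hBF, sub_self]
      exact zero_mem _
    · rw [linkProj_single, if_neg hBF, map_zero, sub_zero]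
      exact Finsupp.single_mem_supported K 1 hBF

end Join

/-- The faces not containing `B` span a subcomplex that is a cone with apex `v`, hence acyclic,
and the faces containing `B` form the join of the simplex `B` with `Δ'`; so a nonzero class of
`Δ` in degree `ℓ` survives in `Δ'` in degree `ℓ - |B|`. -/
theorem hdim_ne_zero_of_link (hΔ : IsLowerSet Δ) (hΔ' : IsLowerSet Δ') (hfin : Δ.Finite)
    (hfin' : Δ'.Finite) {B : Finset ℕ} {v : ℕ} (hlink : ∀ F ∈ Δ, B ⊆ F → F \ B ∈ Δ')
    (hjoin : ∀ G ∈ Δ', B ∪ G ∈ Δ ∧ Disjoint B G) (hcone : ∀ F ∈ Δ, ¬ B ⊆ F → insert v F ∈ Δ)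
    {ℓ : ℤ} (h : hdim K Δ ℓ ≠ 0) : hdim K Δ' (ℓ - B.card) ≠ 0 := by
  set ℓ' := ℓ - B.card
  contrapose! h
  rw [hdim_eq_zero_iff hΔ hfin]
  intro z hz
  obtain ⟨g, hg⟩ : linkProj K Δ Δ' B (ℓ + 1) (ℓ' + 1) z ∈
      LinearMap.range (bdry K Δ' (ℓ' + 2) (ℓ' + 1)) := by
    refine (hdim_eq_zero_iff hΔ' hfin' ℓ').1 h (LinearMap.mem_ker.2 ?_)
    rw [← LinearMap.comp_apply, bdry_comp_linkProj (b := ℓ) hΔ hlink (by ring) (by ring) (by ring),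
      LinearMap.comp_apply, LinearMap.mem_ker.1 hz, map_zero]
  set w := joinLift K Δ Δ' B (ℓ' + 2) (ℓ + 2) g
  set x := z - bdry K Δ (ℓ + 2) (ℓ + 1) w
  have hx : x ∈ Finsupp.supported K K {F | ¬ B ⊆ F.1} := by
    have hπx : linkProj K Δ Δ' B (ℓ + 1) (ℓ' + 1) x = 0 := by
      rw [map_sub, ← LinearMap.comp_apply (linkProj K Δ Δ' B (ℓ + 1) (ℓ' + 1)),
        ← bdry_comp_linkProj (a := ℓ + 2) (a' := ℓ' + 2) hΔ hlink (by ring) (by ring) (by ring),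
        LinearMap.comp_apply,
        ← LinearMap.comp_apply (linkProj K Δ Δ' B (ℓ + 2) (ℓ' + 2)),
        linkProj_comp_joinLift hjoin (by ring), LinearMap.id_apply, hg, sub_self]
    have := sub_joinLift_linkProj_mem_supported (a' := ℓ' + 1) hlink (by ring) x
    rwa [hπx, map_zero, sub_zero] at this
  have hxcycle : bdry K Δ (ℓ + 1) ℓ x = 0 := by
    rw [map_sub, LinearMap.mem_ker.1 hz, zero_sub, neg_eq_zero]
    exact LinearMap.congr_fun (bdry_comp_bdry hΔ _ _ _) w
  have hconeable : {F : facesC Δ (ℓ + 1) | ¬ B ⊆ F.1} ⊆ {F | v ∉ F.1 → insert v F.1 ∈ Δ} :=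
    fun F hF _ => hcone F.1 F.2.1 hF
  have hhom := bdry_coneOp_add_coneOp_bdry (v := v) (b := ℓ + 2) (c := ℓ) hΔ (by ring) (by ring)
    (Finsupp.supported_mono hconeable hx)
  rw [hxcycle, map_zero, add_zero] at hhom
  refine ⟨w + coneOp K Δ v (ℓ + 1) (ℓ + 2) x, ?_⟩
  rw [map_add, hhom, add_sub_cancel]

end SC

section Cycle

variable {n t : ℕ}

lemma mem_cycForm {a x : ℕ} : x ∈ cycForm n t a ↔ ∃ k < t, (a + k) % n = x := by
  simp [cycForm]

lemma cycForm_mod (a : ℕ) : cycForm n t (a % n) = cycForm n t a :=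
  image_congr fun k _ => Nat.mod_add_mod a n k

lemma add_mod_mem_cycForm {a i j : ℕ} (hij : i ≤ j) (hj : j < i + t) :
    (a + j) % n ∈ cycForm n t (a + i) :=
  mem_cycForm.2 ⟨j - i, by omega, by rw [add_assoc, Nat.add_sub_cancel' hij]⟩

lemma add_mod_mem_cycForm_iff {a i j : ℕ} (hj : j < n) (hin : i + t ≤ n) :
    (a + j) % n ∈ cycForm n t (a + i) ↔ i ≤ j ∧ j < i + t := by
  refine ⟨fun h => ?_, fun h => add_mod_mem_cycForm h.1 h.2⟩
  obtain ⟨k, hk, hkj⟩ := mem_cycForm.1 h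
  rw [add_assoc] at hkj
  have := (Nat.ModEq.add_left_cancel' a hkj).eq_of_lt_of_lt (by omega) hj
  omega

lemma cycForm_succ_left (a : ℕ) : cycForm n (t + 1) a = insert (a % n) (cycForm n t (a + 1)) := by
  ext x
  simp only [mem_insert, mem_cycForm]
  constructor
  · rintro ⟨k, hk, rfl⟩
    rcases k with _ | k
    · exact Or.inl rfl
    · exact Or.inr ⟨k, by omega, by rw [add_assoc, add_comm 1 k]⟩
  · rintro (rfl | ⟨k, hk, rfl⟩)
    · exact ⟨0, by omega, rfl⟩
    · exact ⟨k + 1, by omega, by rw [add_assoc, add_comm 1 k]⟩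

lemma cycForm_succ_right (a : ℕ) :
    cycForm n (t + 1) a = insert ((a + t) % n) (cycForm n t a) := by
  rw [cycForm, range_add_one, image_insert, cycForm]

lemma cycForm_add_one (a : ℕ) :
    cycForm n t (a + 1) = (cycForm n t a).image (fun x => (x + 1) % n) := by
  rw [cycForm, cycForm, image_image]
  refine image_congr fun k _ => ?_
  rw [Function.comp_apply, Nat.mod_add_mod, add_right_comm]

lemma card_cycForm (htn : t ≤ n) (a : ℕ) : (cycForm n t a).card = t := by
  rw [cycForm, card_image_of_injOn, card_range]
  intro i hi j hj hij
  simp only [coe_range, Set.mem_Iio] at hi hj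
  exact (Nat.ModEq.add_left_cancel' a hij).eq_of_lt_of_lt (by omega) (by omega)

lemma exists_cycForm_eq_add {s : ℕ} (hs : s < n) (a : ℕ) :
    ∃ D < n, cycForm n t a = cycForm n t (s + D) := by
  have ha := Nat.mod_lt a (show 0 < n by omega)
  rcases le_or_gt s (a % n) with h | h
  · exact ⟨a % n - s, by omega, by rw [Nat.add_sub_cancel' h, cycForm_mod]⟩
  · refine ⟨a % n + n - s, by omega, ?_⟩
    rw [← cycForm_mod (s + _), show s + (a % n + n - s) = a % n + n by omega, Nat.add_mod_right,
      cycForm_mod, cycForm_mod]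

lemma add_one_mod_add_pred_mod (hn : 0 < n) (x : ℕ) : ((x + 1) % n + (n - 1)) % n = x % n := by
  rw [Nat.mod_add_mod, show x + 1 + (n - 1) = x + n by omega, Nat.add_mod_right]

lemma cycForm_eq_of_pred_notMem {a s : ℕ} (hsn : s < n) (hs : s ∈ cycForm n t a)
    (hpred : (s + (n - 1)) % n ∉ cycForm n t a) : cycForm n t a = cycForm n t s := by
  obtain ⟨k, hk, rfl⟩ := mem_cycForm.1 hs
  rcases k with _ | k
  · rw [add_zero, cycForm_mod]
  · refine absurd (mem_cycForm.2 ⟨k, by omega, ?_⟩) hpred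
    rw [← add_assoc, add_one_mod_add_pred_mod (by omega)]

lemma exists_mem_pred_notMem {W : Finset ℕ} (hW : W ⊆ range n) (hne : W.Nonempty)
    (hcard : W.card < n) : ∃ s ∈ W, (s + (n - 1)) % n ∉ W := by
  obtain ⟨g, hgn, hgW⟩ : ∃ g < n, g ∉ W := by
    by_contra! h
    exact hcard.not_ge ((card_range n).symm.le.trans
      (card_le_card fun x hx => h x (mem_range.1 hx)))
  obtain ⟨w, hw⟩ := hne
  have hex : ∃ k, (g + (k + 1)) % n ∈ W := by
    have hwn := mem_range.1 (hW hw)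
    rcases lt_or_gt_of_ne (ne_of_mem_of_not_mem hw hgW) with h | h
    · refine ⟨w + n - g - 1, ?_⟩
      rwa [show g + (w + n - g - 1 + 1) = w + n by omega, Nat.add_mod_right, Nat.mod_eq_of_lt hwn]
    · refine ⟨w - g - 1, ?_⟩
      rwa [show g + (w - g - 1 + 1) = w by omega, Nat.mod_eq_of_lt hwn]
  refine ⟨_, Nat.find_spec hex, ?_⟩
  rw [← add_assoc, add_one_mod_add_pred_mod (by omega)]
  rcases h : Nat.find hex with _ | k
  · rwa [add_zero, Nat.mod_eq_of_lt hgn]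
  · exact Nat.find_min hex (by omega)

/-- The restriction to `W` of the Stanley–Reisner complex of `I_t(C_n)`, as in Hochster's
formula. -/
def srCycleOn (n t : ℕ) (W : Finset ℕ) : Set (Finset ℕ) :=
  {F | F ∈ SRcomplex n (cycFacets n t) ∧ F ⊆ W}

lemma mem_srCycleOn (hn : 0 < n) {W F : Finset ℕ} (hW : W ⊆ range n) :
    F ∈ srCycleOn n t W ↔ F ⊆ W ∧ ∀ a, ¬ cycForm n t a ⊆ F := by
  refine ⟨fun ⟨⟨_, hF⟩, hFW⟩ => ⟨hFW, fun a ha => hF ⟨_, ?_, (cycForm_mod a).trans_subset ha⟩⟩,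
    fun ⟨hFW, hF⟩ => ⟨⟨hFW.trans hW, fun ⟨_, hG, hGF⟩ => ?_⟩, hFW⟩⟩
  · exact mem_image_of_mem _ (mem_range.2 (Nat.mod_lt a hn))
  · obtain ⟨a, -, rfl⟩ := mem_image.1 hG
    exact hF a hGF

lemma isLowerSet_srCycleOn (W : Finset ℕ) : IsLowerSet (srCycleOn n t W) := by
  rintro F G (hGF : G ⊆ F) ⟨⟨hFr, hF⟩, hFW⟩
  exact ⟨⟨hGF.trans hFr, fun ⟨H, hH, hHG⟩ => hF ⟨H, hH, hHG.trans hGF⟩⟩, hGF.trans hFW⟩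

lemma finite_srCycleOn (W : Finset ℕ) : (srCycleOn n t W).Finite :=
  W.powerset.finite_toSet.subset fun _ hF => mem_powerset.2 hF.2

lemma cycForm_eq_insert (ht : 1 ≤ t) {s : ℕ} (hsn : s < n) :
    cycForm n t s = insert s (cycForm n (t - 1) (s + 1)) := by
  conv_lhs => rw [← Nat.sub_add_cancel ht]
  rw [cycForm_succ_left, Nat.mod_eq_of_lt hsn]

lemma cycForm_add_one_eq_insert (ht : 1 ≤ t) (s : ℕ) :
    cycForm n t (s + 1) = insert ((s + t) % n) (cycForm n (t - 1) (s + 1)) := by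
  conv_lhs => rw [← Nat.sub_add_cancel ht]
  rw [cycForm_succ_right, show s + 1 + (t - 1) = s + t by omega]

lemma notMem_cycForm_add_one (htn : t < n) (s : ℕ) (hsn : s < n) : s ∉ cycForm n t (s + 1) := by
  have := add_mod_mem_cycForm_iff (a := s) (i := 1) (j := 0) (t := t) (n := n) (by omega) (by omega)
  rw [add_zero, Nat.mod_eq_of_lt hsn] at this
  exact fun h => absurd (this.1 h).1 (by omega)

lemma insert_mem_srCycleOn {W F : Finset ℕ} {s : ℕ} (hW : W ⊆ range n) (hs : s ∈ W)
    (hpred : (s + (n - 1)) % n ∉ W) (hF : F ∈ srCycleOn n t W)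
    (hwin : ¬ cycForm n t s ⊆ insert s F) : insert s F ∈ srCycleOn n t W := by
  have hsn := mem_range.1 (hW hs)
  rw [mem_srCycleOn (by omega) hW] at hF ⊢
  refine ⟨insert_subset hs hF.1, fun a ha => ?_⟩
  by_cases hsa : s ∈ cycForm n t a
  · refine hwin (cycForm_eq_of_pred_notMem hsn hsa (fun h => hpred ?_) ▸ ha)
    exact insert_subset hs hF.1 (ha h)
  · exact hF.2 a fun x hx => (mem_insert.1 (ha hx)).resolve_left fun h => hsa (h ▸ hx)

lemma exists_end_mem_cycForm_add {D : ℕ} (ht : 1 ≤ t) (hD : D < n)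
    (hnear : ¬ (t < D ∧ D + t ≤ n)) (s : ℕ) :
    ∃ j, (j = 0 ∨ j = t) ∧ (s + j) % n ∈ cycForm n t (s + D) := by
  rcases Nat.eq_zero_or_pos D with hD0 | hDpos
  · exact ⟨0, Or.inl rfl, add_mod_mem_cycForm (by omega) (by omega)⟩
  rcases le_or_gt D t with hDt | hDt
  · exact ⟨t, Or.inr rfl, add_mod_mem_cycForm hDt (by omega)⟩
  · refine ⟨0, Or.inl rfl, ?_⟩
    rw [← Nat.add_mod_right, add_zero]
    exact add_mod_mem_cycForm (by omega) (by omega)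

section Reduction

variable {W : Finset ℕ} {s : ℕ}

lemma sdiff_mem_srCycleOn_sdiff (hW : W ⊆ range n) (hs : s ∈ W) (ht : 1 ≤ t)
    {F : Finset ℕ} (hF : F ∈ srCycleOn n t W) (hBF : cycForm n (t - 1) (s + 1) ⊆ F) :
    F \ cycForm n (t - 1) (s + 1) ∈ srCycleOn n t (W \ cycForm n (t + 1) s) := by
  have hsn := mem_range.1 (hW hs)
  rw [mem_srCycleOn (by omega) hW] at hF
  rw [mem_srCycleOn (by omega) (sdiff_subset.trans hW)]
  refine ⟨fun x hx => ?_, fun a ha => hF.2 a (ha.trans sdiff_subset)⟩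
  obtain ⟨hxF, hxB⟩ := mem_sdiff.1 hx
  refine mem_sdiff.2 ⟨hF.1 hxF, fun hxC => ?_⟩
  rw [cycForm_succ_left, Nat.mod_eq_of_lt hsn, cycForm_add_one_eq_insert ht] at hxC
  rcases mem_insert.1 hxC with rfl | hxC
  · exact hF.2 x (cycForm_eq_insert ht hsn ▸ insert_subset hxF hBF)
  rcases mem_insert.1 hxC with rfl | hxB'
  · exact hF.2 (s + 1) (cycForm_add_one_eq_insert ht s ▸ insert_subset hxF hBF)
  · exact hxB hxB'

lemma union_mem_srCycleOn (hW : W ⊆ range n) (hs : s ∈ W) (ht : 1 ≤ t) (htn : t < n)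
    (hwin : cycForm n t s ⊆ W) {G : Finset ℕ}
    (hG : G ∈ srCycleOn n t (W \ cycForm n (t + 1) s)) :
    cycForm n (t - 1) (s + 1) ∪ G ∈ srCycleOn n t W := by
  have hsn := mem_range.1 (hW hs)
  rw [mem_srCycleOn (by omega) (sdiff_subset.trans hW)] at hG
  rw [mem_srCycleOn (by omega) hW]
  have hBW : cycForm n (t - 1) (s + 1) ⊆ W :=
    (subset_insert _ _).trans (cycForm_eq_insert ht hsn ▸ hwin)
  refine ⟨union_subset hBW (hG.1.trans sdiff_subset), fun a ha => ?_⟩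
  have memB : ∀ j < n, (s + j) % n ∈ cycForm n (t - 1) (s + 1) ↔ 1 ≤ j ∧ j < t := fun j hj => by
    rw [add_mod_mem_cycForm_iff hj (by omega)]; omega
  have memC : ∀ j < n, (s + j) % n ∈ cycForm n (t + 1) s ↔ j ≤ t := fun j hj => by
    have := add_mod_mem_cycForm_iff (a := s) (i := 0) (t := t + 1) hj (by omega)
    rw [add_zero] at this
    rw [this]; omega
  have hends : ∀ j < n, j = 0 ∨ j = t → (s + j) % n ∉ cycForm n (t - 1) (s + 1) ∪ G := by
    refine fun j hj hj0t h => (mem_union.1 h).elim (fun h => ?_) fun h => ?_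
    · have := (memB j hj).1 h; omega
    · exact (mem_sdiff.1 (hG.1 h)).2 ((memC j hj).2 (by omega))
  -- A window starting `D` steps after `s` either contains `s` or `s + t`, neither of which lies
  -- in `B ∪ G`, or lies strictly between them on the far side, where `B` is absent.
  obtain ⟨D, hD, hDa⟩ := exists_cycForm_eq_add (t := t) hsn a
  rw [hDa] at ha
  by_cases hfar : t < D ∧ D + t ≤ n
  · refine hG.2 (s + D) fun _ hx => ?_
    obtain ⟨k, hk, rfl⟩ := mem_cycForm.1 hx
    rw [add_assoc] at hx ⊢
    refine (mem_union.1 (ha hx)).resolve_left fun h => ?_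
    have := (memB (D + k) (by omega)).1 h; omega
  · obtain ⟨j, hj0t, hj⟩ := exists_end_mem_cycForm_add ht hD hfar s
    exact hends j (by omega) hj0t (ha hj)

def succHull (n : ℕ) (W : Finset ℕ) : Finset ℕ :=
  W ∪ W.image fun x => (x + 1) % n

lemma succHull_subset_range (hW : W ⊆ range n) :
    succHull n W ⊆ range n :=
  union_subset hW <| image_subset_iff.2 fun _ hx =>
    mem_range.2 (Nat.mod_lt _ (Nat.zero_lt_of_lt (mem_range.1 (hW hx))))

lemma card_succHull_sdiff_add_le (hW : W ⊆ range n) (hs : s ∈ W)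
    (hpred : (s + (n - 1)) % n ∉ W) (htn : t < n) (hwin : cycForm n t s ⊆ W) :
    (succHull n (W \ cycForm n (t + 1) s)).card + (t + 1) ≤ (succHull n W).card := by
  have hsn := mem_range.1 (hW hs)
  have hC : cycForm n (t + 1) s = insert s ((cycForm n t s).image fun x => (x + 1) % n) := by
    rw [cycForm_succ_left, Nat.mod_eq_of_lt hsn, cycForm_add_one]
  have hCW : cycForm n (t + 1) s ⊆ succHull n W := by
    rw [hC]
    exact insert_subset (mem_union_left _ hs)
      ((image_subset_image hwin).trans subset_union_right)
  have hsub : succHull n (W \ cycForm n (t + 1) s) ⊆ succHull n W \ cycForm n (t + 1) s := by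
    refine union_subset (sdiff_subset_sdiff subset_union_left le_rfl) ?_
    rintro _ hy
    obtain ⟨x, hx, rfl⟩ := mem_image.1 hy
    obtain ⟨hxW, hxC⟩ := mem_sdiff.1 hx
    have hpred_succ : ∀ y < n, ((y + 1) % n + (n - 1)) % n = y := fun y hy => by
      rw [add_one_mod_add_pred_mod (by omega), Nat.mod_eq_of_lt hy]
    refine mem_sdiff.2 ⟨mem_union_right _ (mem_image_of_mem _ hxW), fun h => ?_⟩
    rcases mem_insert.1 (hC ▸ h) with h | h
    · exact hpred (by rwa [← h, hpred_succ x (mem_range.1 (hW hxW))])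
    · obtain ⟨y, hy, hyx⟩ := mem_image.1 h
      have hxy : y = x := by
        rw [← hpred_succ y (mem_range.1 (hW (hwin hy))),
          ← hpred_succ x (mem_range.1 (hW hxW)), hyx]
      exact hxC (hxy ▸ cycForm_succ_right (n := n) s ▸ mem_insert_of_mem hy)
  have := card_le_card hsub
  rw [card_sdiff_of_subset hCW, card_cycForm htn] at this
  have := card_le_card hCW
  rw [card_cycForm htn] at this
  omega

theorem hdim_srCycleOn_sdiff_ne_zero {K : Type} [Field K] (hW : W ⊆ range n) (hs : s ∈ W)
    (hpred : (s + (n - 1)) % n ∉ W) (ht : 1 ≤ t) (htn : t < n) (hwin : cycForm n t s ⊆ W)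
    {ℓ : ℤ} (h : SC.hdim K (srCycleOn n t W) ℓ ≠ 0) :
    SC.hdim K (srCycleOn n t (W \ cycForm n (t + 1) s)) (ℓ - (t - 1 : ℕ)) ≠ 0 := by
  have hsn := mem_range.1 (hW hs)
  have hBC : cycForm n (t - 1) (s + 1) ⊆ cycForm n (t + 1) s := by
    rw [cycForm_succ_right, cycForm_eq_insert ht hsn]
    exact (subset_insert _ _).trans (subset_insert _ _)
  have hsB : s ∉ cycForm n (t - 1) (s + 1) := notMem_cycForm_add_one (by omega) s hsn
  have := SC.hdim_ne_zero_of_link (isLowerSet_srCycleOn W) (isLowerSet_srCycleOn _)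
    (finite_srCycleOn W) (finite_srCycleOn _) (v := s)
    (fun F hF hBF => sdiff_mem_srCycleOn_sdiff hW hs ht hF hBF)
    (fun G hG => ⟨union_mem_srCycleOn hW hs ht htn hwin hG,
      disjoint_left.2 fun x hxB hxG => (mem_sdiff.1 (hG.2 hxG)).2 (hBC hxB)⟩)
    (fun F hF hBF => insert_mem_srCycleOn hW hs hpred hF fun hsF =>
      hBF ((insert_subset_insert_iff hsB).1 (cycForm_eq_insert ht hsn ▸ hsF)))
    h
  rwa [card_cycForm (by omega)] at this

end Reduction

theorem add_one_le_of_hdim_srCycleOn_ne_zero {K : Type} [Field K] (ht : 1 ≤ t) (htn : t ≤ n)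
    {W : Finset ℕ} (hW : W ⊆ range n) (hWn : W.card < n) {ℓ : ℤ}
    (h : SC.hdim K (srCycleOn n t W) ℓ ≠ 0) :
    ℓ + 1 ≤ ((t - 1) * ((succHull n W).card / (t + 1)) : ℕ) := by
  induction W using strongInduction generalizing ℓ with
  | H W ih =>
  rcases W.eq_empty_or_nonempty with rfl | hne
  · refine le_trans ?_ (Int.natCast_nonneg _)
    by_contra! hℓ
    refine h (SC.hdim_eq_zero_of_forall_card_ne (isLowerSet_srCycleOn _) (finite_srCycleOn _)
      fun F hF => ?_)
    rw [subset_empty.1 hF.2, card_empty, Nat.cast_zero]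
    omega
  obtain ⟨s, hs, hpred⟩ := exists_mem_pred_notMem hW hne hWn
  have hsn := mem_range.1 (hW hs)
  by_cases hwin : cycForm n t s ⊆ W
  swap
  · exact absurd (SC.hdim_eq_zero_of_cone (isLowerSet_srCycleOn W) (finite_srCycleOn W)
      (fun F hF => insert_mem_srCycleOn hW hs hpred hF fun h' =>
        hwin (h'.trans (insert_subset hs hF.2))) ℓ) h
  have htn' : t < n := (card_cycForm htn s ▸ card_le_card hwin).trans_lt hWn
  have hsC : s ∈ cycForm n (t + 1) s := by
    rw [cycForm_succ_left, Nat.mod_eq_of_lt hsn]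
    exact mem_insert_self _ _
  have hsub : W \ cycForm n (t + 1) s ⊂ W := (ssubset_iff_of_subset sdiff_subset).2
    ⟨s, hs, fun h => (mem_sdiff.1 h).2 hsC⟩
  have hle := ih _ hsub (sdiff_subset.trans hW)
    ((card_le_card sdiff_subset).trans_lt hWn)
    (hdim_srCycleOn_sdiff_ne_zero hW hs hpred ht htn' hwin h)
  have hq : (succHull n (W \ cycForm n (t + 1) s)).card / (t + 1) + 1 ≤
      (succHull n W).card / (t + 1) := by
    rw [← Nat.add_div_right _ (by omega)]
    exact Nat.div_le_div_right (card_succHull_sdiff_add_le hW hs hpred htn' hwin)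
  have := Nat.mul_le_mul_left (t - 1) hq
  rw [mul_add, mul_one] at this
  omega

end Cycle

theorem nonzero_betti_reg_bound_general (K : Type) [Field K] (n t p d i j : ℕ) (ht2 : 2 ≤ t)
    (htn : t ≤ n) (hd : d ≤ t) (hn : n = (t + 1) * p + d) (hjn : j < n)
    (hb : bettiCycle K n t i j ≠ 0) : j - i ≤ (t - 1) * p := by
  unfold bettiCycle betti at hb
  obtain ⟨W, hWmem, hW⟩ := exists_ne_zero_of_sum_ne_zero hb
  obtain ⟨hWn, hWcard⟩ := mem_powersetCard.1 hWmem
  have hbound := add_one_le_of_hdim_srCycleOn_ne_zero (by omega) htn hWn (hWcard ▸ hjn) hW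
  have hp : (succHull n W).card / (t + 1) ≤ p :=
    calc (succHull n W).card / (t + 1) ≤ n / (t + 1) := Nat.div_le_div_right
          ((card_le_card (succHull_subset_range hWn)).trans_eq (card_range n))
      _ = p := by rw [hn, Nat.mul_add_div (by omega), Nat.div_eq_of_lt (by omega), add_zero]
  have := Nat.mul_le_mul_left (t - 1) hp
  omega

/-- Theorem 5.4(2). If `2 ≤ t ≤ n`, `n = (t+1)p + d`, `0 ≤ d ≤ t`,
`i ≤ j < n` and `β_{i,j}(R/I_t(C_n)) ≠ 0`, then `j − i ≤ (t−1)p`. -/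
theorem nonzero_betti_reg_bound (K : Type) [Field K] (n t p d i j : ℕ) (ht2 : 2 ≤ t)
    (htn : t ≤ n) (hd : d ≤ t) (hn : n = (t + 1) * p + d) (hij : i ≤ j) (hjn : j < n)
    (hb : bettiCycle K n t i j ≠ 0) : j - i ≤ (t - 1) * p :=
  nonzero_betti_reg_bound_general K n t p d i j ht2 htn hd hn hjn hb
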